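/- arXiv:1409.7424 — 2 statements merged into one kernel-verified Lean document; each statement's English description precedes it below -/
import Mathlib

section
/- Let ν be a finite Borel measure on ℝ, λ ∈ ℝ, 0 < α ≤ 1, d ≥ 1, β_L = L^{d/α}, and I a symmetric bounded interval. If the upper symmetric α-derivative D^α_ν(λ) = limsup_{ε→0⁺} ν(λ-ε,λ+ε)/(2ε)^α lies in (0, ∞), then there exists a strictly increasing sequence of integers L_n → ∞ such that lim_{n→∞} L_n^d · ν(λ + β_{L_n}^{-1} I) = |I|^α · D^α_ν(λ). -/
/-! Write `g ε = ν [λ - ε, λ + ε]` and `ε_L = c / β_L`. Since `(2 ε_L)^α = (2c)^α / L^d`, one has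
`L^d g(ε_L) = (2c)^α · g(ε_L) / (2 ε_L)^α`, so it suffices that `D` is a cluster point of the
sequence `g(ε_L) / (2 ε_L)^α`. It eventually stays below `D + δ` because `ε_L → 0⁺`. It comes
back near `D` infinitely often because `g` is monotone: if `g ε / (2ε)^α > m` and
`ε_{K+1} < ε ≤ ε_K`, then `g(ε_K) / (2 ε_K)^α > m (2 ε_{K+1})^α / (2 ε_K)^α = m (K / (K+1))^d`,
and the last factor tends to `1`. -/

open MeasureTheory Filter Set Topology

theorem mapClusterPt_of_frequently_lt_of_eventually_lt {ι α : Type*} [LinearOrder α]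
    [TopologicalSpace α] [OrderTopology α] [NoMaxOrder α] [NoMinOrder α]
    {F : Filter ι} {u : ι → α} {x : α}
    (hlow : ∀ a < x, ∃ᶠ i in F, a < u i) (hup : ∀ b > x, ∀ᶠ i in F, u i < b) :
    MapClusterPt x F u :=
  (nhds_basis_Ioo x).mapClusterPt_iff_frequently.2 fun ⟨a, b⟩ ⟨ha, hb⟩ =>
    (hlow a ha).and_eventually (hup b hb)

theorem exists_le_and_succ_lt_of_le_of_eventually_lt {α : Type*} [LinearOrder α]
    {u : ℕ → α} {a : α} {N : ℕ} (hN : a ≤ u N) (h : ∀ᶠ n in atTop, u n < a) :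
    ∃ K ≥ N, a ≤ u K ∧ u (K + 1) < a := by
  by_contra! H
  have hge : ∀ K ≥ N, a ≤ u K := fun K hK => Nat.le_induction hN H K hK
  obtain ⟨n, hn, hnN⟩ := (h.and (eventually_ge_atTop N)).exists
  exact hn.not_ge (hge n hnN)

section RatioAlongSequence

variable {g φ : ℝ → ℝ} {e : ℕ → ℝ}

theorem frequently_mul_ratio_lt_div_comp (hg : Monotone g) (hφ : MonotoneOn φ (Ioi 0))
    (hφ0 : ∀ ε > 0, 0 < φ ε) (he : Tendsto e atTop (𝓝[>] 0)) {m : ℝ} (hm : 0 ≤ m)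
    (hfreq : ∃ᶠ ε in 𝓝[>] 0, m < g ε / φ ε) :
    ∃ᶠ n in atTop, m * (φ (e (n + 1)) / φ (e n)) < g (e n) / φ (e n) := by
  rw [frequently_atTop]
  intro N
  obtain ⟨N₀, hN₀⟩ := eventually_atTop.1 (he.eventually self_mem_nhdsWithin)
  set N' := max N N₀
  have hpos : ∀ n ≥ N', 0 < e n := fun n hn => hN₀ n (le_of_max_le_right hn)
  obtain ⟨ε, hmε, hε0, hεN'⟩ :=
    (hfreq.and_eventually (Ioo_mem_nhdsGT (hpos N' le_rfl))).exists
  obtain ⟨K, hK, hεK, hKε⟩ := exists_le_and_succ_lt_of_le_of_eventually_lt hεN'.le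
    ((tendsto_nhds_of_tendsto_nhdsWithin he).eventually (gt_mem_nhds hε0))
  refine ⟨K, le_of_max_le_left hK, ?_⟩
  rw [← mul_div_assoc, div_lt_div_iff_of_pos_right (hφ0 _ (hpos K hK))]
  calc m * φ (e (K + 1)) ≤ m * φ ε :=
        mul_le_mul_of_nonneg_left (hφ (hpos _ (by omega)) hε0 hKε.le) hm
    _ < g ε := (lt_div_iff₀ (hφ0 ε hε0)).1 hmε
    _ ≤ g (e K) := hg hεK

theorem mapClusterPt_limsup_div_comp (hg : Monotone g) (hg0 : 0 ≤ g)
    (hφ : MonotoneOn φ (Ioi 0)) (hφ0 : ∀ ε > 0, 0 < φ ε) (he : Tendsto e atTop (𝓝[>] 0))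
    (hratio : Tendsto (fun n => φ (e (n + 1)) / φ (e n)) atTop (𝓝 1))
    (hbdd : IsBoundedUnder (· ≤ ·) (𝓝[>] 0) fun ε => g ε / φ ε) :
    MapClusterPt (limsup (fun ε => g ε / φ ε) (𝓝[>] 0)) atTop fun n => g (e n) / φ (e n) := by
  have hnonneg : ∀ᶠ ε in 𝓝[>] (0 : ℝ), 0 ≤ g ε / φ ε :=
    eventually_mem_nhdsWithin.mono fun ε hε => div_nonneg (hg0 ε) (hφ0 ε hε).le
  refine mapClusterPt_of_frequently_lt_of_eventually_lt (fun s hs => ?_)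
    fun b hb => he.eventually (eventually_lt_of_limsup_lt hb hbdd)
  rcases lt_or_ge s 0 with hs0 | hs0
  · exact (he.eventually hnonneg).frequently.mono fun n hn => hs0.trans_le hn
  obtain ⟨m, hsm, hmD⟩ := exists_between hs
  have hfreq : ∃ᶠ ε in 𝓝[>] 0, m < g ε / φ ε :=
    frequently_lt_of_lt_limsup (isBoundedUnder_of_eventually_ge hnonneg).isCoboundedUnder_flip hmD
  have hratio_m : ∀ᶠ n in atTop, s < m * (φ (e (n + 1)) / φ (e n)) :=
    (hratio.const_mul m).eventually (lt_mem_nhds (by simpa using hsm))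
  exact ((frequently_mul_ratio_lt_div_comp hg hφ hφ0 he (hs0.trans hsm.le) hfreq).and_eventually
    hratio_m).mono fun n hn => hn.2.trans hn.1

end RatioAlongSequence

theorem tendsto_div_natCast_rpow_nhdsGT_zero {c p : ℝ} (hc : 0 < c) (hp : 0 < p) :
    Tendsto (fun L : ℕ => c / (L : ℝ) ^ p) atTop (𝓝[>] 0) :=
  tendsto_nhdsWithin_iff.2
    ⟨tendsto_const_nhds.div_atTop ((tendsto_rpow_atTop hp).comp tendsto_natCast_atTop_atTop),
      (eventually_ge_atTop 1).mono fun L hL =>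
        div_pos hc (Real.rpow_pos_of_pos (by exact_mod_cast hL) p)⟩

theorem two_mul_div_natCast_rpow_div_rpow {α c : ℝ} (hα : 0 < α) (hc : 0 ≤ c) (d L : ℕ) :
    (2 * (c / (L : ℝ) ^ ((d : ℝ) / α))) ^ α = (2 * c) ^ α / (L : ℝ) ^ d := by
  rw [← mul_div_assoc, Real.div_rpow (by positivity) (by positivity), ← Real.rpow_mul L.cast_nonneg,
    div_mul_cancel₀ _ hα.ne', Real.rpow_natCast]

theorem tendsto_div_pow_succ_div_div_pow {a : ℝ} (ha : a ≠ 0) (d : ℕ) :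
    Tendsto (fun n : ℕ => a / ((n + 1 : ℕ) : ℝ) ^ d / (a / (n : ℝ) ^ d)) atTop (𝓝 1) := by
  have hlim : Tendsto (fun n : ℕ => ((n : ℝ) / (n + 1)) ^ d) atTop (𝓝 1) := by
    simpa using (tendsto_natCast_div_add_atTop (1 : ℝ)).pow d
  refine hlim.congr' ((eventually_ge_atTop 1).mono fun n hn => ?_)
  have hn0 : (n : ℝ) ≠ 0 := by positivity
  push_cast
  rw [div_pow]
  field_simp

theorem stmt_7_general (ν : Measure ℝ) [IsFiniteMeasure ν] (lam : ℝ)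
    (α : ℝ) (hα0 : 0 < α) (d : ℕ) (hd : 1 ≤ d)
    (β : ℕ → ℝ) (hβ : ∀ L : ℕ, β L = (L : ℝ) ^ ((d : ℝ) / α))
    (c : ℝ) (hc : 0 < c) (D : ℝ) (hD0 : 0 < D)
    (hD : D = limsup (fun ε : ℝ =>
      (ν (Icc (lam - ε) (lam + ε))).toReal / (2 * ε) ^ α) (nhdsWithin 0 (Ioi 0))) :
    ∃ Ln : ℕ → ℕ, StrictMono Ln ∧
      Tendsto (fun n : ℕ =>
          ((Ln n : ℝ)) ^ (d : ℕ) *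
            (ν (Icc (lam - c / β (Ln n)) (lam + c / β (Ln n)))).toReal)
        atTop (nhds ((2 * c) ^ α * D)) := by
  obtain rfl : β = fun L : ℕ => (L : ℝ) ^ ((d : ℝ) / α) := funext hβ
  set g : ℝ → ℝ := fun ε => (ν (Icc (lam - ε) (lam + ε))).toReal
  have hg : Monotone g := fun a b hab => ENNReal.toReal_mono (measure_ne_top ν _)
    (measure_mono (Icc_subset_Icc (by linarith) (by linarith)))
  have hφ : MonotoneOn (fun ε : ℝ => (2 * ε) ^ α) (Ioi 0) := fun a ha b _ hab =>
    Real.rpow_le_rpow (by linarith [mem_Ioi.1 ha]) (by linarith) hα0.le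
  have hbdd : IsBoundedUnder (· ≤ ·) (𝓝[>] 0) fun ε => g ε / (2 * ε) ^ α := by
    by_contra h
    exact hD0.ne' (hD.trans (Real.limsup_of_not_isBoundedUnder h))
  have h2c : 0 < (2 * c) ^ α := Real.rpow_pos_of_pos (by positivity) α
  have hratio : Tendsto (fun n : ℕ => (2 * (c / ((n + 1 : ℕ) : ℝ) ^ ((d : ℝ) / α))) ^ α /
      (2 * (c / (n : ℝ) ^ ((d : ℝ) / α))) ^ α) atTop (𝓝 1) := by
    simpa only [two_mul_div_natCast_rpow_div_rpow hα0 hc.le] using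
      tendsto_div_pow_succ_div_div_pow h2c.ne' d
  have hcluster := mapClusterPt_limsup_div_comp hg (fun _ => ENNReal.toReal_nonneg) hφ
    (fun ε hε => Real.rpow_pos_of_pos (by linarith) α)
    (tendsto_div_natCast_rpow_nhdsGT_zero hc (div_pos (by exact_mod_cast hd) hα0)) hratio hbdd
  obtain ⟨ψ, hψ, hlim⟩ := (hD ▸ hcluster).tendsto_subseq
  refine ⟨ψ, hψ, (hlim.const_mul ((2 * c) ^ α)).congr'
    ((eventually_ge_atTop 1).mono fun n hn => ?_)⟩
  have hψn : (ψ n : ℝ) ≠ 0 :=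
    Nat.cast_ne_zero.2 (Nat.one_le_iff_ne_zero.1 (hn.trans (hψ.id_le n)))
  change (2 * c) ^ α * (g (c / (ψ n : ℝ) ^ ((d : ℝ) / α)) / _) =
    (ψ n : ℝ) ^ d * g (c / (ψ n : ℝ) ^ ((d : ℝ) / α))
  rw [two_mul_div_natCast_rpow_div_rpow hα0 hc.le]
  have := h2c.ne'
  generalize g _ = y
  field_simp

theorem stmt_7 (ν : Measure ℝ) [IsFiniteMeasure ν] (lam : ℝ)
    (α : ℝ) (hα0 : 0 < α) (hα1 : α ≤ 1) (d : ℕ) (hd : 1 ≤ d)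
    (β : ℕ → ℝ) (hβ : ∀ L : ℕ, β L = (L : ℝ) ^ ((d : ℝ) / α))
    (c : ℝ) (hc : 0 < c) (D : ℝ) (hD0 : 0 < D)
    (hD : D = limsup (fun ε : ℝ =>
      (ν (Icc (lam - ε) (lam + ε))).toReal / (2 * ε) ^ α) (nhdsWithin 0 (Ioi 0))) :
    ∃ Ln : ℕ → ℕ, StrictMono Ln ∧
      Tendsto (fun n : ℕ =>
          ((Ln n : ℝ)) ^ (d : ℕ) *
            (ν (Icc (lam - c / β (Ln n)) (lam + c / β (Ln n)))).toReal)
        atTop (nhds ((2 * c) ^ α * D)) :=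
  stmt_7_general ν lam α hα0 d hd β hβ c hc D hD0 hD
end

section
/- Let X be a nonnegative-integer-valued random variable and t ∈ ℝ. Then E[e^{itX}] = 1 + E[X](e^{it} - 1) + R, where R = Σ_{k≥2} (e^{itk} - k e^{it} + k - 1)·P(X = k), and |R| ≤ 2·E[X(X-1)]. -/
/-!
Write `e^{itn} = 1 + n (e^{it} - 1) + R(n)`. The remainder vanishes at `n = 0, 1` and its
increments `R(n+1) - R(n) = (e^{itn} - 1)(e^{it} - 1)` have norm at most `4n`, so
`‖R(n)‖ ≤ 2n(n-1)`. Integrating against the law of `X` gives the identity, and the bound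
follows from `‖R(X)‖ ≤ 2X(X-1)` pointwise.
-/

open MeasureTheory Complex

noncomputable def expRemainder (t : ℝ) (n : ℕ) : ℂ :=
  exp (I * t * n) - n * exp (I * t) + n - 1

lemma exp_I_mul_natCast_eq (t : ℝ) (n : ℕ) :
    exp (I * t * n) = 1 + n * (exp (I * t) - 1) + expRemainder t n := by
  unfold expRemainder
  ring

lemma expRemainder_succ_sub (t : ℝ) (n : ℕ) :
    expRemainder t (n + 1) - expRemainder t n = (exp (I * t * n) - 1) * (exp (I * t) - 1) := by
  unfold expRemainder
  push_cast
  rw [mul_add, mul_one, exp_add]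
  ring

lemma norm_exp_I_mul_sub_one_le (x : ℝ) : ‖exp (I * x) - 1‖ ≤ 2 :=
  (norm_sub_le _ _).trans (by rw [mul_comm, norm_exp_ofReal_mul_I, norm_one]; norm_num)

lemma norm_expRemainder_succ_sub_le (t : ℝ) (n : ℕ) :
    ‖expRemainder t (n + 1) - expRemainder t n‖ ≤ 4 * n := by
  rcases n.eq_zero_or_pos with rfl | hn
  · simp [expRemainder_succ_sub]
  have h₁ : ‖exp (I * t * n) - 1‖ ≤ 2 := by
    simpa [mul_assoc] using norm_exp_I_mul_sub_one_le (t * n)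
  have hn' : (1 : ℝ) ≤ n := by exact_mod_cast hn
  calc ‖expRemainder t (n + 1) - expRemainder t n‖
      = ‖exp (I * t * n) - 1‖ * ‖exp (I * t) - 1‖ := by rw [expRemainder_succ_sub, norm_mul]
    _ ≤ 2 * 2 := by gcongr; exact norm_exp_I_mul_sub_one_le t
    _ ≤ 4 * n := by linarith

lemma norm_expRemainder_le (t : ℝ) (n : ℕ) :
    ‖expRemainder t n‖ ≤ 2 * ((n * (n - 1) : ℕ) : ℝ) := by
  induction n with
  | zero => simp [expRemainder]
  | succ n ih =>
    have hstep : n * (n - 1) + 2 * n = (n + 1) * (n + 1 - 1) := by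
      rcases n with _ | m
      · rfl
      · simp only [Nat.add_sub_cancel]; ring
    calc ‖expRemainder t (n + 1)‖
        ≤ ‖expRemainder t n‖ + ‖expRemainder t (n + 1) - expRemainder t n‖ :=
          norm_le_norm_add_norm_sub' _ _
      _ ≤ 2 * ((n * (n - 1) : ℕ) : ℝ) + 4 * n :=
          add_le_add ih (norm_expRemainder_succ_sub_le t n)
      _ = 2 * (((n + 1) * (n + 1 - 1) : ℕ) : ℝ) := by
          rw [← hstep]; push_cast; ring

lemma integral_comp_eq_tsum_measureReal {Ω α E : Type*} [MeasurableSpace Ω] {μ : Measure Ω}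
    [MeasurableSpace α] [Countable α] [MeasurableSingletonClass α]
    [NormedAddCommGroup E] [NormedSpace ℝ E] [CompleteSpace E]
    {X : Ω → α} (hX : Measurable X) {g : α → E} (hg : Integrable (fun ω => g (X ω)) μ) :
    ∫ ω, g (X ω) ∂μ = ∑' a, μ.real {ω | X ω = a} • g a := by
  have hgm : AEStronglyMeasurable g (μ.map X) := .of_discrete
  rw [← integral_map hX.aemeasurable hgm,
    integral_countable ((integrable_map_measure hgm hX.aemeasurable).2 hg)]
  simp_rw [map_measureReal_apply hX (measurableSet_singleton _)]
  rfl

lemma tsum_nat_add_two {M : Type*} [AddCommMonoid M] [TopologicalSpace M] {f : ℕ → M}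
    (h₀ : f 0 = 0) (h₁ : f 1 = 0) : ∑' k, f (k + 2) = ∑' n, f n := by
  refine (add_left_injective 2).tsum_eq fun n hn => ?_
  match n, hn with
  | 0, hn => exact absurd h₀ hn
  | 1, hn => exact absurd h₁ hn
  | k + 2, _ => exact ⟨k, rfl⟩

section RandomVariable

variable {Ω : Type*} [MeasurableSpace Ω] {μ : Measure Ω} {X : Ω → ℕ} (t : ℝ)

lemma integrable_expRemainder_comp (hX : Measurable X)
    (hX2 : Integrable (fun ω => ((X ω * (X ω - 1) : ℕ) : ℝ)) μ) :
    Integrable (fun ω => expRemainder t (X ω)) μ :=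
  (hX2.const_mul 2).mono'
    ((StronglyMeasurable.of_discrete (f := expRemainder t)).comp_measurable hX).aestronglyMeasurable
    (ae_of_all _ fun ω => norm_expRemainder_le t (X ω))

lemma norm_integral_expRemainder_comp_le
    (hX2 : Integrable (fun ω => ((X ω * (X ω - 1) : ℕ) : ℝ)) μ) :
    ‖∫ ω, expRemainder t (X ω) ∂μ‖ ≤ 2 * ∫ ω, ((X ω * (X ω - 1) : ℕ) : ℝ) ∂μ := by
  rw [← integral_const_mul]
  exact norm_integral_le_of_norm_le (hX2.const_mul 2)
    (ae_of_all _ fun ω => norm_expRemainder_le t (X ω))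

lemma integral_expRemainder_comp_eq_tsum (hX : Measurable X)
    (hR : Integrable (fun ω => expRemainder t (X ω)) μ) :
    ∫ ω, expRemainder t (X ω) ∂μ
      = ∑' k : ℕ, expRemainder t (k + 2) * (μ.real {ω | X ω = k + 2} : ℂ) := by
  rw [integral_comp_eq_tsum_measureReal hX hR,
    tsum_nat_add_two (f := fun n => expRemainder t n * (μ.real {ω | X ω = n} : ℂ))
      (by simp [expRemainder]) (by simp [expRemainder])]
  simp_rw [Complex.real_smul, mul_comm]

lemma integral_exp_I_mul_natCast_comp_eq [IsProbabilityMeasure μ]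
    (hX1 : Integrable (fun ω => (X ω : ℝ)) μ)
    (hR : Integrable (fun ω => expRemainder t (X ω)) μ) :
    ∫ ω, exp (I * t * (X ω : ℂ)) ∂μ
      = 1 + (∫ ω, (X ω : ℝ) ∂μ : ℝ) * (exp (I * t) - 1) + ∫ ω, expRemainder t (X ω) ∂μ := by
  have hlin : Integrable (fun ω => (X ω : ℂ) * (exp (I * t) - 1)) μ :=
    hX1.ofReal.mul_const _
  have hfirst : Integrable (fun ω => 1 + (X ω : ℂ) * (exp (I * t) - 1)) μ :=
    (integrable_const 1).add hlin
  simp_rw [exp_I_mul_natCast_eq t]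
  rw [integral_add hfirst hR, integral_add (integrable_const 1) hlin, integral_const,
    integral_mul_const, ← integral_complex_ofReal]
  simp

end RandomVariable

theorem stmt_9 {Ω : Type*} [MeasurableSpace Ω] (μ : Measure Ω) [IsProbabilityMeasure μ]
    (X : Ω → ℕ) (hX : Measurable X)
    (h1 : Integrable (fun ω => (X ω : ℝ)) μ)
    (h2 : Integrable (fun ω => ((X ω * (X ω - 1) : ℕ) : ℝ)) μ)
    (t : ℝ) :
    (∫ ω, Complex.exp (Complex.I * t * (X ω : ℂ)) ∂μ)
      = 1 + (∫ ω, (X ω : ℝ) ∂μ : ℝ) * (Complex.exp (Complex.I * t) - 1)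
        + ∑' k : ℕ,
            (Complex.exp (Complex.I * t * ((k + 2 : ℕ) : ℂ))
              - ((k + 2 : ℕ) : ℂ) * Complex.exp (Complex.I * t) + ((k + 2 : ℕ) : ℂ) - 1)
            * ((μ {ω | X ω = k + 2}).toReal : ℂ) ∧
    ‖∑' k : ℕ,
        (Complex.exp (Complex.I * t * ((k + 2 : ℕ) : ℂ))
          - ((k + 2 : ℕ) : ℂ) * Complex.exp (Complex.I * t) + ((k + 2 : ℕ) : ℂ) - 1)
        * ((μ {ω | X ω = k + 2}).toReal : ℂ)‖
      ≤ 2 * ∫ ω, ((X ω * (X ω - 1) : ℕ) : ℝ) ∂μ := by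
  have hR := integrable_expRemainder_comp t hX h2
  have hsum := integral_expRemainder_comp_eq_tsum t hX hR
  refine ⟨?_, ?_⟩
  · rw [integral_exp_I_mul_natCast_comp_eq t h1 hR, hsum]
    rfl
  · change ‖∑' k : ℕ, expRemainder t (k + 2) * (μ.real {ω | X ω = k + 2} : ℂ)‖ ≤ _
    rw [← hsum]
    exact norm_integral_expRemainder_comp_le t h2
end
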